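/- Let p ≥ 2 and let G be a {P3 ∪ P2, 2K1 + Kp}-free graph with ω(G) ≥ 3p−1 and maximum clique A. Then for every k, the set I_k (vertices outside A adjacent to all of A except v_k) is empty; consequently every vertex outside A is nonadjacent to at least two vertices of A. -/

import Mathlib

open SimpleGraph

/-- The join of two graphs: all cross edges present. -/
def joinG {α β : Type*} (G : SimpleGraph α) (H : SimpleGraph β) : SimpleGraph (α ⊕ β) :=
  SimpleGraph.fromRel (fun x y => match x, y with
    | Sum.inl a, Sum.inl b => G.Adj a b
    | Sum.inr a, Sum.inr b => H.Adj a b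
    | Sum.inl _, Sum.inr _ => True
    | _, _ => False)

/-- The graph `P₃ ∪ P₂`: disjoint union of a path on 3 vertices and an edge. -/
def P3P2 : SimpleGraph (Fin 3 ⊕ Fin 2) := pathGraph 3 ⊕g pathGraph 2

/-- The graph `K₁ ∪ K₂`: disjoint union of a vertex and an edge. -/
def K1K2 : SimpleGraph (Fin 1 ⊕ Fin 2) := (⊥ : SimpleGraph (Fin 1)) ⊕g (⊤ : SimpleGraph (Fin 2))

/-- The graph `(K₁ ∪ K₂) + Kₚ`: join of `K₁ ∪ K₂` with a complete graph on `p` vertices. -/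
def K1K2Kp (p : ℕ) : SimpleGraph ((Fin 1 ⊕ Fin 2) ⊕ Fin p) := joinG K1K2 (⊤ : SimpleGraph (Fin p))

/-- The graph `2K₁ + Kₚ`: join of two isolated vertices with a complete graph on `p` vertices. -/
def twoK1Kp (p : ℕ) : SimpleGraph (Fin 2 ⊕ Fin p) :=
  joinG (⊥ : SimpleGraph (Fin 2)) (⊤ : SimpleGraph (Fin p))

/-- The HVN graph: `(K₁ ∪ K₂) + K₂`. -/
def HVN : SimpleGraph ((Fin 1 ⊕ Fin 2) ⊕ Fin 2) := K1K2Kp 2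

/-- The diamond: `2K₁ + K₂`, i.e. `K₄` minus an edge. -/
def diamond : SimpleGraph (Fin 2 ⊕ Fin 2) := twoK1Kp 2

/-- The paw: `(K₁ ∪ K₂) + K₁`. -/
def paw : SimpleGraph ((Fin 1 ⊕ Fin 2) ⊕ Fin 1) := K1K2Kp 1

/-- `G` is `H`-free if it has no induced subgraph isomorphic to `H`,
i.e. there is no graph embedding of `H` into `G`. -/
def FreeInd {α β : Type*} (H : SimpleGraph α) (G : SimpleGraph β) : Prop :=
  ¬ Nonempty (H ↪g G)

/-!
A vertex `x` outside a maximum clique `A` is nonadjacent to some vertex of `A`, since otherwise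
`A ∪ {x}` would be a larger clique. If `x` missed only `v_k`, then `x` and `v_k` would be two
nonadjacent vertices whose common neighbourhood contains the clique `A \ {v_k}` of size
`ω - 1 ≥ p`, which spans an induced `2K₁ + Kₚ`.
-/

open Finset

section joinG

variable {α β : Type*} {H₁ : SimpleGraph α} {H₂ : SimpleGraph β}

@[simp] lemma joinG_adj_inl_inl {a b : α} :
    (joinG H₁ H₂).Adj (.inl a) (.inl b) ↔ H₁.Adj a b := by
  simp only [joinG, fromRel_adj, ne_eq, Sum.inl.injEq, H₁.adj_comm b a, or_self]
  exact and_iff_right_of_imp H₁.ne_of_adj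

@[simp] lemma joinG_adj_inr_inr {a b : β} :
    (joinG H₁ H₂).Adj (.inr a) (.inr b) ↔ H₂.Adj a b := by
  simp only [joinG, fromRel_adj, ne_eq, Sum.inr.injEq, H₂.adj_comm b a, or_self]
  exact and_iff_right_of_imp H₂.ne_of_adj

@[simp] lemma joinG_adj_inl_inr {a : α} {b : β} : (joinG H₁ H₂).Adj (.inl a) (.inr b) := by
  simp [joinG]

@[simp] lemma joinG_adj_inr_inl {a : α} {b : β} : (joinG H₁ H₂).Adj (.inr b) (.inl a) := by
  simp [joinG]

namespace SimpleGraph.Embedding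

variable {V : Type*} {G : SimpleGraph V}

def joinG (f : H₁ ↪g G) (g : H₂ ↪g G) (hfg : ∀ a b, G.Adj (f a) (g b)) :
    _root_.joinG H₁ H₂ ↪g G where
  toFun := Sum.elim f g
  inj' := f.injective.sumElim g.injective fun a b => (hfg a b).ne
  map_rel_iff' := by
    rintro (a | a) (b | b) <;> simp [hfg, fun a b => (hfg a b).symm]

def ofIsClique (f : α ↪ V) (hf : G.IsClique (Set.range f)) : (⊤ : SimpleGraph α) ↪g G where
  toEmbedding := f
  map_rel_iff' {a b} := by
    simp only [top_adj]
    exact ⟨fun h hab => G.loopless.irrefl _ (hab ▸ h),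
      fun hab => hf (Set.mem_range_self a) (Set.mem_range_self b) (f.injective.ne hab)⟩

def ofNotAdj {a b : V} (hab : a ≠ b) (hnadj : ¬G.Adj a b) : (⊥ : SimpleGraph (Fin 2)) ↪g G where
  toFun := ![a, b]
  inj' := injective_pair_iff_ne.2 hab
  map_rel_iff' {i j} := by
    simp only [Function.Embedding.coeFn_mk, bot_adj, iff_false]
    fin_cases i <;> fin_cases j <;> simp [hnadj, G.adj_comm b a]

end SimpleGraph.Embedding

end joinG

namespace SimpleGraph

variable {V : Type*} {G : SimpleGraph V}

theorem nonempty_twoK1Kp_embedding {p : ℕ} {a b : V} {T : Finset V} (hab : a ≠ b)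
    (hnadj : ¬G.Adj a b) (hT : G.IsClique (T : Set V)) (hcard : #T = p)
    (ha : ∀ t ∈ T, G.Adj a t) (hb : ∀ t ∈ T, G.Adj b t) : Nonempty (twoK1Kp p ↪g G) := by
  let e : Fin p ↪ V := (T.equivFinOfCardEq hcard).symm.toEmbedding.trans (.subtype _)
  have he_mem (j : Fin p) : e j ∈ T := ((T.equivFinOfCardEq hcard).symm j).2
  have he : G.IsClique (Set.range e) := hT.subset (Set.range_subset_iff.2 he_mem)
  refine ⟨(Embedding.ofNotAdj hab hnadj).joinG (Embedding.ofIsClique e he) fun i j => ?_⟩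
  fin_cases i
  · exact ha _ (he_mem j)
  · exact hb _ (he_mem j)

lemma isMaximumClique_of_card_eq_cliqueNum [Finite V] {s : Finset V} (hs : G.IsClique (s : Set V))
    (hcard : #s = G.cliqueNum) : G.IsMaximumClique s :=
  ⟨hs, fun _ ht => hcard ▸ ht.card_le_cliqueNum⟩

namespace IsMaximumClique

variable [Finite V] {s : Finset V} {x : V}

theorem exists_not_adj (hs : G.IsMaximumClique s) (hx : x ∉ s) : ∃ y ∈ s, ¬G.Adj x y := by
  by_contra! h
  exact hx (hs.isMaximalClique.mem_of_prop_insert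
    (hs.isClique.insert fun y hy _ => h y hy))

theorem exists_ne_not_adj {p : ℕ} (hf : FreeInd (twoK1Kp p) G) (hs : G.IsMaximumClique s)
    (hp : p < #s) {y : V} (hx : x ∉ s) (hy : y ∈ s) : ∃ z ∈ s, z ≠ y ∧ ¬G.Adj x z := by
  classical
  by_contra! h
  have hxy : ¬G.Adj x y := fun hxy => by
    obtain ⟨z, hz, hxz⟩ := hs.exists_not_adj hx
    obtain rfl | hzy := eq_or_ne z y
    exacts [hxz hxy, hxz (h z hz hzy)]
  obtain ⟨T, hTs, hT⟩ := exists_subset_card_eq (s := s.erase y) (n := p)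
    (by rw [card_erase_of_mem hy]; omega)
  have hTs' (t : V) (ht : t ∈ T) : t ≠ y ∧ t ∈ s := mem_erase.1 (hTs ht)
  refine hf (nonempty_twoK1Kp_embedding (ne_of_mem_of_not_mem hy hx).symm hxy
    (hs.isClique.subset fun t ht => (hTs' t ht).2) hT (fun t ht => ?_) fun t ht => ?_)
  · exact h t (hTs' t ht).2 (hTs' t ht).1
  · exact hs.isClique hy (hTs' t ht).2 (hTs' t ht).1.symm

end IsMaximumClique

end SimpleGraph

theorem stmt_9_general {V : Type*} [Fintype V] (G : SimpleGraph V) (p : ℕ)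
    (hf2 : FreeInd (twoK1Kp p) G)
    (hω : 3 * p - 1 ≤ G.cliqueNum)
    (v : Fin G.cliqueNum → V) (hinj : Function.Injective v)
    (hclique : G.IsClique (Set.range v)) :
    (∀ k : Fin G.cliqueNum,
        {x | x ∉ Set.range v ∧ ∀ i, i ≠ k → G.Adj x (v i)} = ∅) ∧
    (∀ x, x ∉ Set.range v →
        ∃ i j : Fin G.cliqueNum, i ≠ j ∧ ¬ G.Adj x (v i) ∧ ¬ G.Adj x (v j)) := by
  classical
  have hcard : #(univ.image v) = G.cliqueNum := by simp [card_image_of_injective _ hinj]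
  have hs : G.IsMaximumClique (univ.image v) :=
    isMaximumClique_of_card_eq_cliqueNum (by simpa using hclique) hcard
  have hmiss (x : V) (hx : x ∉ Set.range v) (k : Fin G.cliqueNum) :
      ∃ i ≠ k, ¬G.Adj x (v i) := by
    obtain ⟨_, hz, hzk, hxz⟩ := hs.exists_ne_not_adj hf2 (by have := k.pos; omega)
      (by simpa using hx) (mem_image_of_mem v (mem_univ k))
    obtain ⟨i, -, rfl⟩ := mem_image.1 hz
    exact ⟨i, fun h => hzk (h ▸ rfl), hxz⟩
  refine ⟨fun k => Set.eq_empty_of_forall_notMem fun x ⟨hx, hadj⟩ => ?_, fun x hx => ?_⟩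
  · obtain ⟨i, hik, hi⟩ := hmiss x hx k
    exact hi (hadj i hik)
  · obtain ⟨_, hy, hxy⟩ := hs.exists_not_adj (x := x) (by simpa using hx)
    obtain ⟨i, -, rfl⟩ := mem_image.1 hy
    obtain ⟨j, hji, hj⟩ := hmiss x hx i
    exact ⟨i, j, hji.symm, hxy, hj⟩

theorem stmt_9 {V : Type*} [Fintype V] (G : SimpleGraph V) (p : ℕ) (hp : 2 ≤ p)
    (hf1 : FreeInd P3P2 G) (hf2 : FreeInd (twoK1Kp p) G)
    (hω : 3 * p - 1 ≤ G.cliqueNum)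
    (v : Fin G.cliqueNum → V) (hinj : Function.Injective v)
    (hclique : G.IsClique (Set.range v)) :
    (∀ k : Fin G.cliqueNum,
        {x | x ∉ Set.range v ∧ ∀ i, i ≠ k → G.Adj x (v i)} = ∅) ∧
    (∀ x, x ∉ Set.range v →
        ∃ i j : Fin G.cliqueNum, i ≠ j ∧ ¬ G.Adj x (v i) ∧ ¬ G.Adj x (v j)) :=
  stmt_9_general G p hf2 hω v hinj hclique
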